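/- arXiv:2505.11930 — 2 statements merged into one kernel-verified Lean document; each statement's English description precedes it below -/
import Mathlib

section
/- No global TGNN captures the formula φ = Y c_1: for every MPNN M (with arbitrary combination and multiset-aggregation functions), every time function φ' : ℝ → ℝ^m, every vector-combining operation ∘, and every output function out, the global TGNN T = (M,φ',out) does not capture Y c_1. Consequently, PTL_{P,Y}×K ≤ T_glob[M,Q,∘] fails for every class M of MPNNs, every class Q of time functions, and every combining operation ∘. -/
set_option maxHeartbeats 1000000

/-! ### Vectors -/

/-- Real vectors of dimension `d`. -/
abbrev Vec (d : ℕ) := Fin d → ℝ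

/-- Cast a vector along an equality of dimensions. -/
def Vec.cast {m n : ℕ} (h : m = n) (x : Vec m) : Vec n := fun j => x (Fin.cast h.symm j)

/-- Truncated ReLU. -/
noncomputable def trReLU (x : ℝ) : ℝ := max 0 (min 1 x)

/-- A single FNN layer: an affine map with rational weights followed by entrywise trReLU. -/
structure AffineLayer (m n : ℕ) where
  weight : Fin n → Fin m → ℚ
  bias : Fin n → ℚ

noncomputable def AffineLayer.eval {m n : ℕ} (l : AffineLayer m n) (x : Vec m) : Vec n :=
  fun j => trReLU ((∑ i, (l.weight j i : ℝ) * x i) + (l.bias j : ℝ))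

/-- A feedforward neural network with trReLU activations,
of input dimension `m` and output dimension `n`. -/
structure FNN (m n : ℕ) where
  depth : ℕ
  dims : ℕ → ℕ
  dim_in : dims 0 = m
  dim_out : dims depth = n
  layers : ∀ i : ℕ, AffineLayer (dims i) (dims (i + 1))

noncomputable def FNN.evalAux {m n : ℕ} (N : FNN m n) : (i : ℕ) → Vec (N.dims 0) → Vec (N.dims i)
  | 0, x => x
  | i + 1, x => (N.layers i).eval (N.evalAux i x)

noncomputable def FNN.eval {m n : ℕ} (N : FNN m n) (x : Vec m) : Vec n :=
  Vec.cast N.dim_out (N.evalAux N.depth (Vec.cast N.dim_in.symm x))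

/-! ### Message-passing GNNs -/

/-- A general message-passing GNN: a finite sequence of layers, each consisting of an
arbitrary multiset-aggregation function and an arbitrary combination function. -/
structure MPNN where
  depth : ℕ
  dims : ℕ → ℕ
  aggDims : ℕ → ℕ
  agg : ∀ i : ℕ, Multiset (Vec (dims i)) → Vec (aggDims i)
  comb : ∀ i : ℕ, Vec (dims i) → Vec (aggDims i) → Vec (dims (i + 1))

/-- Embeddings computed by an MPNN on a labelled graph (given by a symmetric boolean
adjacency function and a labelling `c`). -/
noncomputable def MPNN.emb (M : MPNN) {V : Type} [Fintype V] [DecidableEq V]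
    (adj : V → V → Bool) (c : V → Vec (M.dims 0)) : (i : ℕ) → V → Vec (M.dims i)
  | 0 => c
  | i + 1 => fun v =>
      M.comb i (M.emb adj c i v)
        (M.agg i ((Finset.univ.filter fun u => adj v u = true).val.map
          fun u => M.emb adj c i u))

/-- The final embedding `M(G,v)`. -/
noncomputable def MPNN.run (M : MPNN) {V : Type} [Fintype V] [DecidableEq V]
    (adj : V → V → Bool) (c : V → Vec (M.dims 0)) (v : V) : Vec (M.dims M.depth) :=
  M.emb adj c M.depth v

/-- Entrywise sum of a multiset of vectors. -/
noncomputable def sumAgg (d : ℕ) (S : Multiset (Vec d)) : Vec d :=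
  fun j => (S.map fun x => x j).sum

/-- The class `M̂`: MPNNs whose combination functions are realised by FNNs with trReLU
activations and whose aggregation is the entrywise sum of the multiset. -/
structure MPNNhat where
  depth : ℕ
  dims : ℕ → ℕ
  comb : ∀ i : ℕ, FNN (dims i + dims i) (dims (i + 1))

noncomputable def MPNNhat.toMPNN (M : MPNNhat) : MPNN where
  depth := M.depth
  dims := M.dims
  aggDims := M.dims
  agg := fun i => sumAgg (M.dims i)
  comb := fun i x y => (M.comb i).eval (Fin.append x y)

/-! ### Discrete temporal graphs -/

/-- A discrete temporal graph over vertex set `V` with `k` colours: a sequence of `len`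
snapshots (indexed `0, …, len - 1`, the timestamp of index `i` being `i + 1`), each with a
symmetric set of undirected edges and a `{0,1}`-colouring of the nodes. -/
structure TemporalGraph (V : Type) (k : ℕ) where
  len : ℕ
  len_pos : 0 < len
  adj : ℕ → V → V → Bool
  symm : ∀ i u w, adj i u w = adj i w u
  label : ℕ → V → Fin k → Bool

/-- The colour vector of node `v` at time index `i`, as a real vector. -/
noncomputable def TemporalGraph.colVec {V : Type} {k : ℕ} (TG : TemporalGraph V k)
    (i : ℕ) (v : V) : Vec k :=
  fun j => if TG.label i v j then 1 else 0

/-! ### The product logic PTL_{P,Y} × K -/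

/-- Formulas of the product logic `PTL_{P,Y} × K` over `k` colour propositions. -/
inductive PTLK (k : ℕ) : Type where
  | colour : Fin k → PTLK k
  | not : PTLK k → PTLK k
  | and : PTLK k → PTLK k → PTLK k
  | dia : PTLK k → PTLK k
  | yest : PTLK k → PTLK k
  | past : PTLK k → PTLK k

/-- Satisfaction of a formula at timestamped node `(v, i)` (time indices start at `0`). -/
def Sat {V : Type} {k : ℕ} (TG : TemporalGraph V k) : PTLK k → ℕ → V → Prop
  | .colour j, i, v => TG.label i v j = true
  | .not φ, i, v => ¬ Sat TG φ i v
  | .and φ ψ, i, v => Sat TG φ i v ∧ Sat TG ψ i v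
  | .dia φ, i, v => ∃ u : V, TG.adj i v u = true ∧ Sat TG φ i u
  | .yest φ, i, v => 0 < i ∧ Sat TG φ (i - 1) v
  | .past φ, i, v => ∃ j < i, Sat TG φ j v

/-- The list of subformulas of a formula (containing the formula itself). -/
def PTLK.subformulas {k : ℕ} : PTLK k → List (PTLK k)
  | .colour j => [.colour j]
  | .not φ => .not φ :: φ.subformulas
  | .and φ ψ => .and φ ψ :: (φ.subformulas ++ ψ.subformulas)
  | .dia φ => .dia φ :: φ.subformulas
  | .yest φ => .yest φ :: φ.subformulas
  | .past φ => .past φ :: φ.subformulas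

/-- A formula is temporal if its outermost operator is `Y` or `P`. -/
def PTLK.isTemporal {k : ℕ} : PTLK k → Prop
  | .yest _ => True
  | .past _ => True
  | _ => False

/-- A formula is atomic if it is a colour proposition. -/
def PTLK.isAtomic {k : ℕ} : PTLK k → Prop
  | .colour _ => True
  | _ => False

/-! ### Recursive TGNNs over M̂ -/

/-- A recursive TGNN `T = (M, out)` with `M ∈ M̂`: the input dimension of `M` is
`k + d` where `d` is the output dimension of `M`, and `out` is a single-layer FNN with
trReLU activation. -/
structure RecTGNN (k : ℕ) where
  M : MPNNhat
  dim_in : M.dims 0 = k + M.dims M.depth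
  out : AffineLayer (M.dims M.depth) 1

/-- The state `h_v^{(depth)}(t_i)` computed by a recursive TGNN. -/
noncomputable def RecTGNN.state {k : ℕ} (T : RecTGNN k) {V : Type} [Fintype V] [DecidableEq V]
    (TG : TemporalGraph V k) : ℕ → V → Vec (T.M.dims T.M.depth)
  | 0 => fun v => T.M.toMPNN.run (TG.adj 0)
      (fun u => Vec.cast T.dim_in.symm (Fin.append (TG.colVec 0 u) (fun _ => 0))) v
  | i + 1 => fun v => T.M.toMPNN.run (TG.adj (i + 1))
      (fun u => Vec.cast T.dim_in.symm (Fin.append (TG.colVec (i + 1) u) (T.state TG i u))) v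

/-- The input labelling `h_v^{(0)}(t_i)` fed to `M` at time index `i`. -/
noncomputable def RecTGNN.input {k : ℕ} (T : RecTGNN k) {V : Type} [Fintype V] [DecidableEq V]
    (TG : TemporalGraph V k) : ℕ → V → Vec (T.M.dims 0)
  | 0 => fun u => Vec.cast T.dim_in.symm (Fin.append (TG.colVec 0 u) (fun _ => 0))
  | i + 1 => fun u => Vec.cast T.dim_in.symm (Fin.append (TG.colVec (i + 1) u) (T.state TG i u))

/-- The output `T(TG, v)` of a recursive TGNN at the last time index. -/
noncomputable def RecTGNN.output {k : ℕ} (T : RecTGNN k) {V : Type} [Fintype V] [DecidableEq V]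
    (TG : TemporalGraph V k) (v : V) : ℝ :=
  T.out.eval (T.state TG (TG.len - 1) v) 0

/-- `T` captures `φ`: on every discrete pointed temporal graph, `T` outputs `1`
iff `φ` is satisfied at the distinguished node at the last timestamp. -/
def RecTGNN.captures {k : ℕ} (T : RecTGNN k) (φ : PTLK k) : Prop :=
  ∀ (V : Type) [Fintype V] [DecidableEq V], ∀ (TG : TemporalGraph V k) (v : V),
    Sat TG φ (TG.len - 1) v ↔ T.output TG v = 1

/-! ### Time-and-graph TGNNs -/

/-- A time-and-graph TGNN `T = (M₁, M₂, Cell, out)` with arbitrary MPNNs `M₁, M₂` (of the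
same number of layers), arbitrary cell function and arbitrary output function. -/
structure TandGTGNN (k : ℕ) where
  M₁ : MPNN
  M₂ : MPNN
  sameDepth : M₁.depth = M₂.depth
  hdim : ℕ
  dim1 : M₁.dims 0 = k
  dim2 : M₂.dims 0 = hdim
  cell : Vec (M₁.dims M₁.depth) → Vec (M₂.dims M₂.depth) → Vec hdim
  out : Vec hdim → ℝ

noncomputable def TandGTGNN.state {k : ℕ} (T : TandGTGNN k) {V : Type} [Fintype V]
    [DecidableEq V] (TG : TemporalGraph V k) : ℕ → V → Vec T.hdim
  | 0 => fun v => T.cell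
      (T.M₁.run (TG.adj 0) (fun u => Vec.cast T.dim1.symm (TG.colVec 0 u)) v)
      (T.M₂.run (TG.adj 0) (fun _ => Vec.cast T.dim2.symm (fun _ => 0)) v)
  | i + 1 => fun v => T.cell
      (T.M₁.run (TG.adj (i + 1)) (fun u => Vec.cast T.dim1.symm (TG.colVec (i + 1) u)) v)
      (T.M₂.run (TG.adj (i + 1)) (fun u => Vec.cast T.dim2.symm (T.state TG i u)) v)

noncomputable def TandGTGNN.output {k : ℕ} (T : TandGTGNN k) {V : Type} [Fintype V]
    [DecidableEq V] (TG : TemporalGraph V k) (v : V) : ℝ :=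
  T.out (T.state TG (TG.len - 1) v)

def TandGTGNN.captures {k : ℕ} (T : TandGTGNN k) (φ : PTLK k) : Prop :=
  ∀ (V : Type) [Fintype V] [DecidableEq V], ∀ (TG : TemporalGraph V k) (v : V),
    Sat TG φ (TG.len - 1) v ↔ T.output TG v = 1

/-- Membership of a time-and-graph TGNN in the class `T_TandG[M̂, F]`: both MPNNs lie in
`M̂`, the cell is a single-layer FNN with trReLU activations, and so is the output. -/
def TandGTGNN.inHatF {k : ℕ} (T : TandGTGNN k) : Prop :=
  (∃ N₁ : MPNNhat, T.M₁ = N₁.toMPNN) ∧ (∃ N₂ : MPNNhat, T.M₂ = N₂.toMPNN) ∧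
  (∃ C : AffineLayer (T.M₁.dims T.M₁.depth + T.M₂.dims T.M₂.depth) T.hdim,
     ∀ x y, T.cell x y = C.eval (Fin.append x y)) ∧
  (∃ O : AffineLayer T.hdim 1, ∀ x, T.out x = O.eval x 0)

/-! ### Global TGNNs -/

/-- An operation combining an embedding vector with a time-feature vector of dimension `m`. -/
structure GlobOp (m : ℕ) where
  cdim : ℕ → ℕ
  op : ∀ d : ℕ, Vec d → Vec m → Vec (cdim d)

/-- A global TGNN `T = (M, φ', out)` with arbitrary MPNN components, arbitrary time
function, arbitrary combining operation and arbitrary output function. -/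
structure GlobTGNN (k : ℕ) where
  tdim : ℕ
  circ : GlobOp tdim
  timeFn : ℝ → Vec tdim
  depth : ℕ
  dims : ℕ → ℕ
  dim_in : dims 0 = k
  aggDims : ℕ → ℕ
  agg : ∀ i : ℕ, Multiset (Vec (circ.cdim (dims i))) → Vec (aggDims i)
  comb : ∀ i : ℕ, Vec (dims i) → Vec (aggDims i) → Vec (dims (i + 1))
  out : Vec (dims depth) → ℝ

/-- The embeddings `h_v^{(i)}(t_j)` computed by a global TGNN. -/
noncomputable def GlobTGNN.emb {k : ℕ} (T : GlobTGNN k) {V : Type} [Fintype V] [DecidableEq V]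
    (TG : TemporalGraph V k) : (i : ℕ) → ℕ → V → Vec (T.dims i)
  | 0 => fun j v => Vec.cast T.dim_in.symm (TG.colVec j v)
  | i + 1 => fun j v =>
      T.comb i (T.emb TG i j v)
        (T.agg i ((Finset.range (j + 1)).val.bind fun h =>
          (Finset.univ.filter fun u => TG.adj h v u = true).val.map
            fun u => T.circ.op _ (T.emb TG i h u) (T.timeFn ((j : ℝ) - (h : ℝ)))))

noncomputable def GlobTGNN.output {k : ℕ} (T : GlobTGNN k) {V : Type} [Fintype V]
    [DecidableEq V] (TG : TemporalGraph V k) (v : V) : ℝ :=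
  T.out (T.emb TG T.depth (TG.len - 1) v)

def GlobTGNN.captures {k : ℕ} (T : GlobTGNN k) (φ : PTLK k) : Prop :=
  ∀ (V : Type) [Fintype V] [DecidableEq V], ∀ (TG : TemporalGraph V k) (v : V),
    Sat TG φ (TG.len - 1) v ↔ T.output TG v = 1

/-- Vector concatenation as the combining operation `∥`. -/
def concatOp (m : ℕ) : GlobOp m where
  cdim := fun d => d + m
  op := fun _ x y => Fin.append x y

/-- A time2vec function. -/
structure Time2Vec (m : ℕ) where
  w : Fin m → ℚ
  b : Fin m → ℚ
  σ : ℝ → ℝ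
  period : ℝ
  period_pos : 0 < period
  periodic : Function.Periodic σ period

noncomputable def Time2Vec.eval {m : ℕ} (f : Time2Vec m) (t : ℝ) : Vec m :=
  fun j => if (j : ℕ) = 0 then (f.w j : ℝ) * t + (f.b j : ℝ)
           else f.σ ((f.w j : ℝ) * t + (f.b j : ℝ))

/-- The class `T_glob[M̂_msg, Q_time2vec, ∥]`: global TGNNs whose MPNN lies in `M̂_msg`
(combination functions given by trReLU FNNs and aggregation `agg S = Σ_{x∈S} msg(x)` with
`msg` a trReLU FNN), whose time function is a time2vec function, and whose combining
operation is vector concatenation; the output is a single-layer trReLU FNN. -/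
structure GlobTGNNmsg (k : ℕ) where
  tdim : ℕ
  timeFn : Time2Vec tdim
  depth : ℕ
  dims : ℕ → ℕ
  dim_in : dims 0 = k
  aggDims : ℕ → ℕ
  msg : ∀ i : ℕ, FNN (dims i + tdim) (aggDims i)
  comb : ∀ i : ℕ, FNN (dims i + aggDims i) (dims (i + 1))
  out : AffineLayer (dims depth) 1

noncomputable def GlobTGNNmsg.toGlob {k : ℕ} (T : GlobTGNNmsg k) : GlobTGNN k where
  tdim := T.tdim
  circ := concatOp T.tdim
  timeFn := T.timeFn.eval
  depth := T.depth
  dims := T.dims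
  dim_in := T.dim_in
  aggDims := T.aggDims
  agg := fun i S => sumAgg (T.aggDims i) (S.map (T.msg i).eval)
  comb := fun i x y => (T.comb i).eval (Fin.append x y)
  out := fun x => (T.out).eval x 0

noncomputable def GlobTGNNmsg.output {k : ℕ} (T : GlobTGNNmsg k) {V : Type} [Fintype V]
    [DecidableEq V] (TG : TemporalGraph V k) (v : V) : ℝ :=
  T.toGlob.output TG v

def GlobTGNNmsg.captures {k : ℕ} (T : GlobTGNNmsg k) (φ : PTLK k) : Prop :=
  ∀ (V : Type) [Fintype V] [DecidableEq V], ∀ (TG : TemporalGraph V k) (v : V),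
    Sat TG φ (TG.len - 1) v ↔ T.output TG v = 1

/-- The formula `Y c₁`. -/
def yc : PTLK 1 := .yest (.colour 0)

def TGA : TemporalGraph Unit 1 where
  len := 2
  len_pos := by norm_num
  adj := fun _ _ _ => false
  symm := fun _ _ _ => rfl
  label := fun i _ _ => i == 0

def TGB : TemporalGraph Unit 1 where
  len := 2
  len_pos := by norm_num
  adj := fun _ _ _ => false
  symm := fun _ _ _ => rfl
  label := fun _ _ _ => false

lemma emb_eq (T : GlobTGNN 1) :
    ∀ i, T.emb TGA i 1 () = T.emb TGB i 1 () := by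
  intro i
  induction i with
  | zero =>
      funext j
      simp [GlobTGNN.emb, TGA, TGB, TemporalGraph.colVec, Vec.cast]
  | succ i ih =>
      show T.comb i _ _ = T.comb i _ _
      rw [ih]
      congr 1

/-- Theorem 5: no global TGNN (with arbitrary MPNN, time function,
combining operation, and output function) captures `Y c₁`; consequently
`PTL_{P,Y}×K ≤ T_glob[M,Q,∘]` fails for every class of MPNNs, time functions, and
combining operations (in particular for the full class of all global TGNNs). -/
theorem glob_cannot_capture_PTLK :
    (∀ T : GlobTGNN 1, ¬ T.captures yc) ∧
    ¬ (∀ φ : PTLK 1, ∃ T : GlobTGNN 1, T.captures φ) := by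
  have main : ∀ T : GlobTGNN 1, ¬ T.captures yc := by
    intro T hcap
    have hA := (hcap Unit TGA ()).mp (by simp [TGA, yc, Sat])
    have hB : ¬ T.output TGB () = 1 := by
      intro h
      have := (hcap Unit TGB ()).mpr h
      simp [TGB, yc, Sat] at this
    apply hB
    have heq : T.output TGA () = T.output TGB () := by
      unfold GlobTGNN.output
      rw [show TGA.len - 1 = 1 from rfl, show TGB.len - 1 = 1 from rfl, emb_eq]
    rw [← heq]
    exact hA
  refine ⟨main, fun h => ?_⟩
  obtain ⟨T, hT⟩ := h yc
  exact main T hT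
end

section
/- T_rec[M̂] ≰ T_glob[M̂_msg, Q_time2vec, ∥]: there exists a recursive TGNN T ∈ T_rec[M̂] such that for every global TGNN T' ∈ T_glob[M̂_msg, Q_time2vec, ∥] there is a discrete pointed temporal graph (TG,v) with T(TG,v) = 1 not equivalent to T'(TG,v) = 1. -/
set_option maxHeartbeats 1000000

/-! The recursive TGNN keeps a single state bit and negates it at every snapshot, so on a lone
isolated vertex it outputs the parity of the number of snapshots. A global TGNN sees time only
through the time features attached to incoming edges: at an isolated vertex every aggregated
multiset is empty, so with no colours its output is the same whatever the length of the
temporal graph. -/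

def FNN.ofLayer {m n : ℕ} (l : AffineLayer m n) : FNN m n where
  depth := 1
  dims := fun | 0 => m | _ + 1 => n
  dim_in := rfl
  dim_out := rfl
  layers := fun | 0 => l | _ + 1 => ⟨0, 0⟩

@[simp]
theorem FNN.ofLayer_eval {m n : ℕ} (l : AffineLayer m n) (x : Vec m) :
    (FNN.ofLayer l).eval x = l.eval x :=
  rfl

@[simp]
theorem trReLU_zero : trReLU 0 = 0 := by simp [trReLU]

@[simp]
theorem trReLU_one : trReLU 1 = 1 := by simp [trReLU]

theorem MPNN.emb_succ_of_isolated (M : MPNN) {V : Type} [Fintype V] [DecidableEq V]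
    {adj : V → V → Bool} {v : V} (hv : ∀ u, adj v u = false) (c : V → Vec (M.dims 0)) (i : ℕ) :
    M.emb adj c (i + 1) v = M.comb i (M.emb adj c i v) (M.agg i 0) := by
  simp [MPNN.emb, hv]

def negLayer : AffineLayer 2 1 :=
  ⟨fun _ i => if i = 0 then -1 else 0, fun _ => 1⟩

theorem negLayer_eval (x : Vec 2) : negLayer.eval x 0 = trReLU (1 - x 0) := by
  simp [negLayer, AffineLayer.eval, Fin.sum_univ_two, sub_eq_neg_add]

def parityTGNN : RecTGNN 0 where
  M := ⟨1, fun _ => 1, fun _ => FNN.ofLayer negLayer⟩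
  dim_in := rfl
  out := ⟨fun _ _ => 1, fun _ => 0⟩

theorem parityTGNN_run {V : Type} [Fintype V] [DecidableEq V] {adj : V → V → Bool} {v : V}
    (hv : ∀ u, adj v u = false) (c : V → Vec 1) :
    parityTGNN.M.toMPNN.run adj c v = fun _ => trReLU (1 - c v 0) := by
  funext j
  obtain rfl : j = (0 : Fin 1) := Subsingleton.elim (α := Fin 1) _ _
  exact (congrFun (MPNN.emb_succ_of_isolated parityTGNN.M.toMPNN hv c 0) (0 : Fin 1)).trans
    (negLayer_eval _)

theorem parityTGNN_state {V : Type} [Fintype V] [DecidableEq V] (TG : TemporalGraph V 0)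
    {v : V} (hv : ∀ i u, TG.adj i v u = false) (i : ℕ) :
    parityTGNN.state TG i v = fun _ => if Even i then 1 else 0 := by
  induction i with
  | zero =>
    refine (parityTGNN_run (hv 0) _).trans ?_
    funext
    simp [Vec.cast, Fin.append, Fin.addCases]
  | succ i ih =>
    refine (parityTGNN_run (hv _) _).trans ?_
    funext
    by_cases h : Even i <;> simp [Vec.cast, Fin.append, Fin.addCases, ih, h, Nat.even_add_one]

theorem parityTGNN_output {V : Type} [Fintype V] [DecidableEq V] (TG : TemporalGraph V 0)
    {v : V} (hv : ∀ i u, TG.adj i v u = false) :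
    parityTGNN.output TG v = if Even (TG.len - 1) then 1 else 0 := by
  rw [RecTGNN.output, parityTGNN_state TG hv]
  change trReLU (∑ _ : Fin 1, ((1 : ℚ) : ℝ) * _ + ((0 : ℚ) : ℝ)) = _
  split_ifs <;> simp

theorem GlobTGNN.emb_eq_of_isolated {k : ℕ} (T : GlobTGNN k) {V V' : Type} [Fintype V]
    [DecidableEq V] [Fintype V'] [DecidableEq V'] {TG : TemporalGraph V k}
    {TG' : TemporalGraph V' k} {v : V} {v' : V'} (hv : ∀ i u, TG.adj i v u = false)
    (hv' : ∀ i u, TG'.adj i v' u = false) {j j' : ℕ} (hc : TG.colVec j v = TG'.colVec j' v')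
    (i : ℕ) : T.emb TG i j v = T.emb TG' i j' v' := by
  induction i with
  | zero => simp [GlobTGNN.emb, hc]
  | succ i ih => simp [GlobTGNN.emb, hv, hv', ih]

theorem GlobTGNN.output_eq_of_isolated {k : ℕ} (T : GlobTGNN k) {V V' : Type} [Fintype V]
    [DecidableEq V] [Fintype V'] [DecidableEq V'] {TG : TemporalGraph V k}
    {TG' : TemporalGraph V' k} {v : V} {v' : V'} (hv : ∀ i u, TG.adj i v u = false)
    (hv' : ∀ i u, TG'.adj i v' u = false)
    (hc : TG.colVec (TG.len - 1) v = TG'.colVec (TG'.len - 1) v') :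
    T.output TG v = T.output TG' v' :=
  congrArg T.out (T.emb_eq_of_isolated hv hv' hc _)

def TemporalGraph.edgeless (V : Type) (k n : ℕ) : TemporalGraph V k where
  len := n + 1
  len_pos := n.succ_pos
  adj := fun _ _ _ => false
  symm := fun _ _ _ => rfl
  label := fun _ _ _ => false

@[simp]
theorem TemporalGraph.edgeless_len (V : Type) (k n : ℕ) :
    (TemporalGraph.edgeless V k n).len = n + 1 :=
  rfl

/-- part of Corollary 8, `T_rec[M̂] ≰ T_glob[M̂_msg, Q_time2vec, ∥]`:
there is a recursive TGNN over `M̂` such that every global TGNN of the class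
`T_glob[M̂_msg, Q_time2vec, ∥]` disagrees with it on some discrete pointed temporal graph. -/
theorem Trec_not_le_glob :
    ∃ (k : ℕ) (T : RecTGNN k), ∀ T' : GlobTGNNmsg k,
      ∃ (nv : ℕ) (TG : TemporalGraph (Fin nv) k) (v : Fin nv),
        ¬ (T.output TG v = 1 ↔ T'.output TG v = 1) := by
  refine ⟨0, parityTGNN, fun T' => ?_⟩
  let TG (n : ℕ) := TemporalGraph.edgeless (Fin 1) 0 n
  have hTG (n i : ℕ) (u : Fin 1) : (TG n).adj i 0 u = false := rfl
  have hglob : T'.output (TG 1) 0 = T'.output (TG 0) 0 :=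
    T'.toGlob.output_eq_of_isolated (hTG 1) (hTG 0) (Subsingleton.elim _ _)
  by_cases h : T'.output (TG 0) 0 = 1
  · refine ⟨1, TG 1, 0, ?_⟩
    rw [parityTGNN_output _ (hTG 1), hglob, h]
    simp [TG]
  · refine ⟨1, TG 0, 0, ?_⟩
    rw [parityTGNN_output _ (hTG 0)]
    simp [TG, h]
end
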